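/- arXiv:2202.09319 — 2 statements merged into one kernel-verified Lean document; each statement's English description precedes it below -/
import Mathlib

section
/- Let T be a finite subgroup of (ℂˣ)³ that is invariant under the two group automorphisms τ(a₁,a₂,a₃) = (a₂/a₁, a₃/a₁, 1/a₁) and σ(a₁,a₂,a₃) = (a₂, a₁, a₃), and let n ≥ 1 be the exponent of T (equivalently, the maximal order of an element of T). Then at least one of the following holds: (1) T = μₙ³, the subgroup of all triples (t₁,t₂,t₃) with t₁ⁿ = t₂ⁿ = t₃ⁿ = 1; (2) n is even and T is isomorphic to ℤ/n × ℤ/n × ℤ/(n/2); (3) n is divisible by 4 and T is isomorphic to ℤ/n × ℤ/n × ℤ/(n/4). -/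
noncomputable section

/-- The group `(ℂˣ)³` of triples of nonzero complex numbers under componentwise
multiplication. -/
abbrev G3 : Type := ℂˣ × ℂˣ × ℂˣ

/-- The subgroup `μₙ³` of triples `(t₁,t₂,t₃)` with `t₁ⁿ = t₂ⁿ = t₃ⁿ = 1`. -/
def muCube (n : ℕ) : Subgroup G3 where
  carrier := {x | x.1 ^ n = 1 ∧ x.2.1 ^ n = 1 ∧ x.2.2 ^ n = 1}
  one_mem' := by simp
  mul_mem' := by
    intro a b ha hb
    refine ⟨?_, ?_, ?_⟩ <;> simp_all [mul_pow]
  inv_mem' := by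
    intro a ha
    refine ⟨?_, ?_, ?_⟩ <;> simp_all [inv_pow]

/-- The automorphism `τ(a₁,a₂,a₃) = (a₂/a₁, a₃/a₁, 1/a₁)` of `(ℂˣ)³`. -/
def tauHom : G3 →* G3 where
  toFun x := (x.2.1 / x.1, x.2.2 / x.1, x.1⁻¹)
  map_one' := by simp
  map_mul' x y := by
    refine Prod.ext ?_ (Prod.ext ?_ ?_) <;>
      simp [div_mul_div_comm, mul_inv, mul_comm]

/-- The automorphism `σ(a₁,a₂,a₃) = (a₂, a₁, a₃)` of `(ℂˣ)³`. -/
def sigmaHom : G3 →* G3 where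
  toFun x := (x.2.1, x.1, x.2.2)
  map_one' := rfl
  map_mul' _ _ := rfl

/-!
Let `n` be the exponent of `T`, so `T ≤ μₙ³`, and pick `t ∈ T` of order `n`. Since
`t / (τστ⁻¹ t) = (t₁², t₁, t₁)`, and likewise for the other coordinates, `T` contains `(u², u, u)`
for every `u` in the subgroup generated by `t₁, t₂, t₃`, which is all of `μₙ` as `t` has order `n`.
Dividing these by their images under `σ` and under the swap of the last two coordinates gives all
triples in `μₙ³` with product `1`. Hence `T` is the preimage in `μₙ³` of its image `P` under
`(t₁, t₂, t₃) ↦ t₁t₂t₃`, and `(t₁, t₂, t₃) ↦ (t₁, t₂, t₁t₂t₃)` maps `T` isomorphically onto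
`μₙ × μₙ × P`. Finally `P` contains `u⁴ = (u²)·u·u` for every `u ∈ μₙ`, so its index in the cyclic
group `μₙ` is `1`, `2` or `4`.
-/

open Subgroup

def prodHom : G3 →* ℂˣ where
  toFun x := x.1 * x.2.1 * x.2.2
  map_one' := by simp
  map_mul' x y := by
    simp only [Prod.fst_mul, Prod.snd_mul]
    ac_rfl

def diagSq : ℂˣ →* G3 where
  toFun u := (u ^ 2, u, u)
  map_one' := by simp
  map_mul' u v := by simp [mul_pow]

def shear : G3 ≃* G3 where
  toFun x := (x.1, x.2.1, x.1 * x.2.1 * x.2.2)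
  invFun x := (x.1, x.2.1, x.2.2 / (x.1 * x.2.1))
  left_inv x := by simp
  right_inv x := by simp
  map_mul' x y := by ext <;> simp; ring

theorem mem_muCube_iff_pow_eq_one {n : ℕ} {x : G3} : x ∈ muCube n ↔ x ^ n = 1 := by
  simp [muCube, Prod.ext_iff]

theorem le_muCube_exponent (T : Subgroup G3) : T ≤ muCube (Monoid.exponent T) := fun x hx =>
  mem_muCube_iff_pow_eq_one.2 <| congrArg Subtype.val (Monoid.pow_exponent_eq_one (⟨x, hx⟩ : T))

theorem prodHom_mem_rootsOfUnity {n : ℕ} {x : G3} (hx : x ∈ muCube n) :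
    prodHom x ∈ rootsOfUnity n ℂ :=
  mul_mem (mul_mem hx.1 hx.2.1) hx.2.2

theorem map_prodHom_le_rootsOfUnity {n : ℕ} {T : Subgroup G3} (hle : T ≤ muCube n) :
    T.map prodHom ≤ rootsOfUnity n ℂ := by
  rintro _ ⟨t, ht, rfl⟩
  exact prodHom_mem_rootsOfUnity (hle ht)

theorem card_map_prodHom_mul_relIndex {n : ℕ} [NeZero n] {T : Subgroup G3}
    (hle : T ≤ muCube n) :
    Nat.card (T.map prodHom) * (T.map prodHom).relIndex (rootsOfUnity n ℂ) = n := by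
  rw [← relIndex_bot_left, relIndex_mul_relIndex _ _ _ bot_le (map_prodHom_le_rootsOfUnity hle),
    relIndex_bot_left, Complex.card_rootsOfUnity]

/-- `K ⊓ μₙ` is cyclic, so its order is its exponent, which is a multiple of `n`. -/
theorem rootsOfUnity_le_of_orderOf_eq {R : Type*} [CommRing R] [IsDomain R] {n : ℕ} [NeZero n]
    {K : Subgroup Rˣ} {x y z : Rˣ} (hx : x ∈ K) (hy : y ∈ K) (hz : z ∈ K)
    (hord : orderOf (x, y, z) = n) : rootsOfUnity n R ≤ K := by
  set K' := K ⊓ rootsOfUnity n R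
  have : Finite K' := Finite.of_injective _ (inclusion_injective (inf_le_right : K' ≤ _))
  have hroot : x ^ n = 1 ∧ y ^ n = 1 ∧ z ^ n = 1 := by
    have h := pow_orderOf_eq_one (x, y, z)
    rw [hord] at h
    simpa [Prod.ext_iff] using h
  have hexp : ∀ u (hu : u ∈ K'), u ^ Monoid.exponent K' = 1 := fun u hu =>
    congrArg Subtype.val (Monoid.pow_exponent_eq_one (⟨u, hu⟩ : K'))
  have hdvd : n ∣ Nat.card K' := by
    rw [← IsCyclic.exponent_eq_card, ← hord]
    refine orderOf_dvd_of_pow_eq_one ?_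
    simp only [Prod.pow_mk, hexp x ⟨hx, hroot.1⟩, hexp y ⟨hy, hroot.2.1⟩,
      hexp z ⟨hz, hroot.2.2⟩, Prod.mk_one_one]
  have hcard : Nat.card (rootsOfUnity n R) ≤ Nat.card K' :=
    (card_rootsOfUnity R n).trans (Nat.le_of_dvd Nat.card_pos hdvd)
  exact (eq_of_le_of_card_ge inf_le_right hcard) ▸ inf_le_left

theorem index_dvd_of_pow_mem {G : Type*} [CommGroup G] [IsCyclic G] [Finite G] {H : Subgroup G}
    {k : ℕ} (hk : ∀ g : G, g ^ k ∈ H) : H.index ∣ k := by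
  have hle : (powMonoidHom k : G →* G).range ≤ H := by
    rintro _ ⟨g, rfl⟩
    exact hk g
  exact (index_dvd_of_le hle).trans
    ((IsCyclic.index_powMonoidHom_range G k).symm ▸ Nat.gcd_dvd_right _ _)

theorem relIndex_map_prodHom_dvd_four {T : Subgroup G3} {n : ℕ} [NeZero n]
    (hdiag : rootsOfUnity n ℂ ≤ T.comap diagSq) :
    (T.map prodHom).relIndex (rootsOfUnity n ℂ) ∣ 4 :=
  index_dvd_of_pow_mem fun u =>
    mem_subgroupOf.2 ⟨diagSq u, hdiag u.2, by simp [prodHom, diagSq, pow_succ]⟩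

/-- Stability under the Weyl group `S₄ = ⟨τ, σ⟩` of `PGL₄`. -/
structure WeylStable (T : Subgroup G3) : Prop where
  tauHom_mem {t : G3} : t ∈ T → tauHom t ∈ T
  sigmaHom_mem {t : G3} : t ∈ T → sigmaHom t ∈ T

theorem WeylStable.of_map_eq {T : Subgroup G3} (htau : T.map tauHom = T)
    (hsigma : T.map sigmaHom = T) : WeylStable T where
  tauHom_mem ht := htau ▸ mem_map_of_mem tauHom ht
  sigmaHom_mem ht := hsigma ▸ mem_map_of_mem sigmaHom ht

namespace WeylStable

variable {T : Subgroup G3} {n : ℕ}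

/-- `τ` has order `4`, so this is `τ⁻¹στ t`. -/
theorem swap_mem (hT : WeylStable T) {t : G3} (ht : t ∈ T) : (t.1, t.2.2, t.2.1) ∈ T := by
  have h := hT.tauHom_mem (hT.tauHom_mem (hT.tauHom_mem (hT.sigmaHom_mem (hT.tauHom_mem ht))))
  convert h using 1
  ext <;> simp [tauHom, sigmaHom] <;> field_simp

theorem diagSq_fst_mem (hT : WeylStable T) {t : G3} (ht : t ∈ T) : diagSq t.1 ∈ T := by
  have h := hT.tauHom_mem (hT.sigmaHom_mem (hT.tauHom_mem (hT.tauHom_mem (hT.tauHom_mem ht))))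
  convert mul_mem ht (inv_mem h) using 1
  ext <;> simp [tauHom, sigmaHom, diagSq]
  field_simp

theorem rootsOfUnity_le_comap_diagSq (hT : WeylStable T) [NeZero n] {t : G3} (ht : t ∈ T)
    (hord : orderOf t = n) : rootsOfUnity n ℂ ≤ T.comap diagSq :=
  rootsOfUnity_le_of_orderOf_eq (hT.diagSq_fst_mem ht) (hT.diagSq_fst_mem (hT.sigmaHom_mem ht))
    (hT.diagSq_fst_mem (hT.sigmaHom_mem (hT.swap_mem ht))) hord

theorem mem_of_prodHom_eq_one (hT : WeylStable T) (hdiag : rootsOfUnity n ℂ ≤ T.comap diagSq)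
    {w : G3} (hw : w ∈ muCube n) (hw1 : prodHom w = 1) : w ∈ T := by
  have hfst : ∀ u ∈ rootsOfUnity n ℂ, (u, u⁻¹, 1) ∈ T := fun u hu => by
    have h : diagSq u ∈ T := hdiag hu
    convert mul_mem h (inv_mem (hT.sigmaHom_mem h)) using 1
    ext <;> simp [sigmaHom, diagSq] <;> field_simp
  have hsnd : ∀ u ∈ rootsOfUnity n ℂ, (1, u, u⁻¹) ∈ T := fun u hu => by
    have h := hT.sigmaHom_mem (hdiag hu)
    convert mul_mem h (inv_mem (hT.swap_mem h)) using 1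
    ext <;> simp [sigmaHom, diagSq] <;> field_simp
  have hw' : w = (w.1, w.1⁻¹, 1) * (1, w.1 * w.2.1, (w.1 * w.2.1)⁻¹) := by
    have h3 : w.2.2 = (w.1 * w.2.1)⁻¹ := eq_inv_of_mul_eq_one_right hw1
    ext <;> simp [h3]
  rw [hw']
  exact mul_mem (hfst _ hw.1) (hsnd _ (mul_mem hw.1 hw.2.1))

theorem mem_iff (hT : WeylStable T) (hle : T ≤ muCube n)
    (hdiag : rootsOfUnity n ℂ ≤ T.comap diagSq) {t : G3} :
    t ∈ T ↔ t ∈ muCube n ∧ prodHom t ∈ T.map prodHom := by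
  refine ⟨fun ht => ⟨hle ht, mem_map_of_mem _ ht⟩, fun ⟨ht, s, hs, hst⟩ => ?_⟩
  have hts : t * s⁻¹ ∈ T :=
    hT.mem_of_prodHom_eq_one hdiag (mul_mem ht (inv_mem (hle hs))) (by simp [hst])
  simpa using mul_mem hts hs

theorem eq_muCube (hT : WeylStable T) (hle : T ≤ muCube n)
    (hdiag : rootsOfUnity n ℂ ≤ T.comap diagSq) (hP : rootsOfUnity n ℂ ≤ T.map prodHom) :
    T = muCube n :=
  le_antisymm hle fun _ hx => (hT.mem_iff hle hdiag).2 ⟨hx, hP (prodHom_mem_rootsOfUnity hx)⟩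

theorem map_shear_eq_prod (hT : WeylStable T) (hle : T ≤ muCube n)
    (hdiag : rootsOfUnity n ℂ ≤ T.comap diagSq) :
    T.map shear.toMonoidHom =
      (rootsOfUnity n ℂ).prod ((rootsOfUnity n ℂ).prod (T.map prodHom)) := by
  ext x
  have hprod : prodHom (shear.symm x) = x.2.2 := by simp [shear, prodHom]
  rw [mem_map_equiv, hT.mem_iff hle hdiag, hprod]
  refine ⟨fun ⟨⟨h1, h2, _⟩, h3⟩ => ⟨h1, h2, h3⟩, fun ⟨h1, h2, h3⟩ => ⟨⟨h1, h2, ?_⟩, h3⟩⟩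
  exact div_mem (map_prodHom_le_rootsOfUnity hle h3) (mul_mem h1 h2)

theorem nonempty_mulEquiv_zmod (hT : WeylStable T) [NeZero n] (hle : T ≤ muCube n)
    (hdiag : rootsOfUnity n ℂ ≤ T.comap diagSq) :
    Nonempty (T ≃* Multiplicative (ZMod n) × Multiplicative (ZMod n) ×
      Multiplicative (ZMod (Nat.card (T.map prodHom)))) := by
  have : Finite (T.map prodHom) :=
    Finite.of_injective _ (inclusion_injective (map_prodHom_le_rootsOfUnity hle))
  have eμ : rootsOfUnity n ℂ ≃* Multiplicative (ZMod n) :=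
    mulEquivOfCyclicCardEq (by rw [Complex.card_rootsOfUnity]; exact (Nat.card_zmod n).symm)
  exact ⟨(shear.subgroupMap T).trans <|
    (MulEquiv.subgroupCongr (hT.map_shear_eq_prod hle hdiag)).trans <|
    (prodEquiv _ _).trans <| MulEquiv.prodCongr eμ <| (prodEquiv _ _).trans <|
    MulEquiv.prodCongr eμ (zmodCyclicMulEquiv inferInstance).symm⟩

end WeylStable

theorem statement0_general (T : Subgroup G3)
    (htau : Subgroup.map tauHom T = T) (hsigma : Subgroup.map sigmaHom T = T)
    (n : ℕ) (hn1 : 1 ≤ n) (hn : n = Monoid.exponent ↥T) :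
    T = muCube n ∨
      (Even n ∧ Nonempty (↥T ≃*
        Multiplicative (ZMod n) × Multiplicative (ZMod n) × Multiplicative (ZMod (n / 2)))) ∨
      (4 ∣ n ∧ Nonempty (↥T ≃*
        Multiplicative (ZMod n) × Multiplicative (ZMod n) × Multiplicative (ZMod (n / 4)))) := by
  have : NeZero n := ⟨by omega⟩
  have hT := WeylStable.of_map_eq htau hsigma
  have hle : T ≤ muCube n := hn ▸ le_muCube_exponent T
  obtain ⟨t, ht⟩ := Monoid.exists_orderOf_eq_exponent (Monoid.exponent_ne_zero.1 (hn ▸ NeZero.ne n))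
  have hdiag := hT.rootsOfUnity_le_comap_diagSq (n := n) t.2 (by rw [orderOf_coe, ht, hn])
  obtain ⟨e⟩ := hT.nonempty_mulEquiv_zmod hle hdiag
  have hcard := card_map_prodHom_mul_relIndex hle
  set d := (T.map prodHom).relIndex (rootsOfUnity n ℂ)
  obtain hd | hd | hd : d = 1 ∨ d = 2 ∨ d = 4 := by
    have : d ∈ Nat.divisors 4 :=
      Nat.mem_divisors.2 ⟨relIndex_map_prodHom_dvd_four hdiag, four_ne_zero⟩
    simpa [show Nat.divisors 4 = {1, 2, 4} by decide] using this
  · exact Or.inl (hT.eq_muCube hle hdiag (relIndex_eq_one.1 hd))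
  · rw [hd] at hcard
    refine Or.inr (Or.inl ⟨even_iff_two_dvd.2 (Dvd.intro_left _ hcard), ?_⟩)
    rw [Nat.div_eq_of_eq_mul_left two_pos hcard.symm]
    exact ⟨e⟩
  · rw [hd] at hcard
    refine Or.inr (Or.inr ⟨Dvd.intro_left _ hcard, ?_⟩)
    rw [Nat.div_eq_of_eq_mul_left four_pos hcard.symm]
    exact ⟨e⟩

theorem statement0 (T : Subgroup G3) (hfin : Finite ↥T)
    (htau : Subgroup.map tauHom T = T) (hsigma : Subgroup.map sigmaHom T = T)
    (n : ℕ) (hn1 : 1 ≤ n) (hn : n = Monoid.exponent ↥T) :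
    T = muCube n ∨
      (Even n ∧ Nonempty (↥T ≃*
        Multiplicative (ZMod n) × Multiplicative (ZMod n) × Multiplicative (ZMod (n / 2)))) ∨
      (4 ∣ n ∧ Nonempty (↥T ≃*
        Multiplicative (ZMod n) × Multiplicative (ZMod n) × Multiplicative (ZMod (n / 4)))) :=
  statement0_general T htau hsigma n hn1 hn
end
end

section
/- For (a,b,c) ∈ ℂ³ with (a,b,c) ≠ (0,0,0), set q_{a,b,c} = a·x₀x₁x₂x₃ + b·Σ_{0≤i<j≤3} xᵢ²xⱼ² + c·(x₀⁴+x₁⁴+x₂⁴+x₃⁴) ∈ ℂ[x₀,x₁,x₂,x₃]. Then there exists a nonzero vector (x₀,x₁,x₂,x₃) ∈ ℂ⁴ at which all four partial derivatives ∂q_{a,b,c}/∂x₀, ∂q_{a,b,c}/∂x₁, ∂q_{a,b,c}/∂x₂, ∂q_{a,b,c}/∂x₃ vanish simultaneously (i.e., the quartic surface {q_{a,b,c} = 0} ⊂ ℙ³(ℂ) is singular) if and only if c·(b+2c)·(b−2c)·(a+2b−4c)·(a−2b+4c)·(a−6b−4c)·(a+6b+4c)·(a²c + 4b³ − 12b²c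 + 16c³) = 0. -/
open MvPolynomial

noncomputable section

/-- The quartic form
`a·x₀x₁x₂x₃ + b·Σ_{i<j} xᵢ²xⱼ² + c·(x₀⁴+x₁⁴+x₂⁴+x₃⁴)`. -/
def quartic (a b c : ℂ) : MvPolynomial (Fin 4) ℂ :=
  C a * (X 0 * X 1 * X 2 * X 3) +
    C b * (X 0 ^ 2 * X 1 ^ 2 + X 0 ^ 2 * X 2 ^ 2 + X 0 ^ 2 * X 3 ^ 2 +
      X 1 ^ 2 * X 2 ^ 2 + X 1 ^ 2 * X 3 ^ 2 + X 2 ^ 2 * X 3 ^ 2) +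
    C c * (X 0 ^ 4 + X 1 ^ 4 + X 2 ^ 4 + X 3 ^ 4)

/-!
With `uᵢ = xᵢ²` and `P = x₀x₁x₂x₃`, one has
`xᵢ ∂ᵢq = aP + 2b uᵢ (u₀ + u₁ + u₂ + u₃) + (4c - 2b) uᵢ²`,
the same quadratic in `uᵢ` for every `i`. So unless `b = 2c` the `uᵢ` take at most two values, and
up to a permutation of the coordinates they follow one of the patterns `4`, `3 + 1`, `2 + 2`. In
each pattern, eliminating `P` between `x₀ ∂₀q = 0` and `P² = u₀u₁u₂u₃` (for `3 + 1`: and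
`x₀x₁x₂ ∂₃q = 0`) forces one of the factors to vanish. Conversely, each factor has an explicit
singular point.
-/

namespace Quartic

/-- `∂q/∂x₀` at `(x, y, z, w)`; the other partials are obtained by permuting the arguments. -/
def partialZero (a b c x y z w : ℂ) : ℂ :=
  a * (y * z * w) + 2 * b * x * (y ^ 2 + z ^ 2 + w ^ 2) + 4 * c * x ^ 3

structure IsCritical (a b c x₀ x₁ x₂ x₃ : ℂ) : Prop where
  d₀ : partialZero a b c x₀ x₁ x₂ x₃ = 0
  d₁ : partialZero a b c x₁ x₀ x₂ x₃ = 0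
  d₂ : partialZero a b c x₂ x₀ x₁ x₃ = 0
  d₃ : partialZero a b c x₃ x₀ x₁ x₂ = 0

variable {a b c x₀ x₁ x₂ x₃ : ℂ}

theorem partialZero_swap₁₂ :
    partialZero a b c x₀ x₁ x₂ x₃ = partialZero a b c x₀ x₂ x₁ x₃ := by
  unfold partialZero; ring

theorem partialZero_swap₂₃ :
    partialZero a b c x₀ x₁ x₂ x₃ = partialZero a b c x₀ x₁ x₃ x₂ := by
  unfold partialZero; ring

theorem isCritical_iff (x : Fin 4 → ℂ) :
    IsCritical a b c (x 0) (x 1) (x 2) (x 3) ↔ ∀ i, eval x (pderiv i (quartic a b c)) = 0 := by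
  have heval : ∀ i, eval x (pderiv i (quartic a b c)) = ![partialZero a b c (x 0) (x 1) (x 2) (x 3),
      partialZero a b c (x 1) (x 0) (x 2) (x 3), partialZero a b c (x 2) (x 0) (x 1) (x 3),
      partialZero a b c (x 3) (x 0) (x 1) (x 2)] i := by
    intro i
    fin_cases i <;> simp [quartic, partialZero, pderiv_X] <;> ring
  simp only [heval, Fin.forall_fin_succ, IsEmpty.forall_iff, and_true]
  exact ⟨fun ⟨h₀, h₁, h₂, h₃⟩ => ⟨h₀, h₁, h₂, h₃⟩, fun ⟨h₀, h₁, h₂, h₃⟩ => ⟨h₀, h₁, h₂, h₃⟩⟩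

/-- The right-hand side of the criterion; its last factor is `a²c + 4(b - 2c)²(b + c)`. -/
def singularDiscr (a b c : ℂ) : ℂ :=
  c * (b + 2 * c) * (b - 2 * c) * (a + 2 * b - 4 * c) * (a - 2 * b + 4 * c) *
    (a - 6 * b - 4 * c) * (a + 6 * b + 4 * c) *
    (a ^ 2 * c + 4 * b ^ 3 - 12 * b ^ 2 * c + 16 * c ^ 3)

theorem singularDiscr_eq_zero_iff :
    singularDiscr a b c = 0 ↔ c = 0 ∨ b + 2 * c = 0 ∨ b - 2 * c = 0 ∨ a + 2 * b - 4 * c = 0 ∨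
      a - 2 * b + 4 * c = 0 ∨ a - 6 * b - 4 * c = 0 ∨ a + 6 * b + 4 * c = 0 ∨
      a ^ 2 * c + 4 * b ^ 3 - 12 * b ^ 2 * c + 16 * c ^ 3 = 0 := by
  simp only [singularDiscr, mul_eq_zero, or_assoc]

namespace IsCritical

theorem swap₀₁ (h : IsCritical a b c x₀ x₁ x₂ x₃) : IsCritical a b c x₁ x₀ x₂ x₃ :=
  ⟨h.d₁, h.d₀, partialZero_swap₁₂ ▸ h.d₂, partialZero_swap₁₂ ▸ h.d₃⟩

theorem swap₁₂ (h : IsCritical a b c x₀ x₁ x₂ x₃) : IsCritical a b c x₀ x₂ x₁ x₃ :=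
  ⟨partialZero_swap₁₂ ▸ h.d₀, h.d₂, h.d₁, partialZero_swap₂₃ ▸ h.d₃⟩

theorem swap₂₃ (h : IsCritical a b c x₀ x₁ x₂ x₃) : IsCritical a b c x₀ x₁ x₃ x₂ :=
  ⟨partialZero_swap₂₃ ▸ h.d₀, partialZero_swap₂₃ ▸ h.d₁, h.d₃, h.d₂⟩

theorem sq_sub_sq_mul_eq_zero (h : IsCritical a b c x₀ x₁ x₂ x₃) :
    (x₀ ^ 2 - x₁ ^ 2) * (b * (x₂ ^ 2 + x₃ ^ 2) + 2 * c * (x₀ ^ 2 + x₁ ^ 2)) = 0 := by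
  have d₀ := h.d₀
  have d₁ := h.d₁
  unfold partialZero at d₀ d₁
  linear_combination (x₀ * d₀ - x₁ * d₁) / 2

theorem sq_eq_sq_of_ne (h : IsCritical a b c x₀ x₁ x₂ x₃) (hbc : b ≠ 2 * c)
    (h₁ : x₁ ^ 2 ≠ x₀ ^ 2) (h₂ : x₂ ^ 2 ≠ x₀ ^ 2) : x₂ ^ 2 = x₁ ^ 2 := by
  have r₁ := (mul_eq_zero.mp h.sq_sub_sq_mul_eq_zero).resolve_left (sub_ne_zero.mpr h₁.symm)
  have r₂ := (mul_eq_zero.mp h.swap₁₂.sq_sub_sq_mul_eq_zero).resolve_left (sub_ne_zero.mpr h₂.symm)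
  have : (b - 2 * c) * (x₂ ^ 2 - x₁ ^ 2) = 0 := by linear_combination r₁ - r₂
  exact sub_eq_zero.mp <| (mul_eq_zero.mp this).resolve_left (sub_ne_zero.mpr hbc)

theorem singularDiscr_eq_zero_of_four_sq_eq (h : IsCritical a b c x₀ x₁ x₂ x₃) (hx₀ : x₀ ≠ 0)
    (h₁ : x₁ ^ 2 = x₀ ^ 2) (h₂ : x₂ ^ 2 = x₀ ^ 2) (h₃ : x₃ ^ 2 = x₀ ^ 2) :
    singularDiscr a b c = 0 := by
  have d₀ := h.d₀
  unfold partialZero at d₀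
  set P := x₀ * x₁ * x₂ * x₃
  have hT : a * P + (6 * b + 4 * c) * x₀ ^ 4 = 0 := by
    linear_combination x₀ * d₀ - 2 * b * x₀ ^ 2 * (h₁ + h₂ + h₃)
  have hP : P ^ 2 = x₀ ^ 8 := by
    linear_combination x₀ ^ 2 * (x₂ ^ 2 * x₃ ^ 2 * h₁ + x₀ ^ 2 * x₃ ^ 2 * h₂ + x₀ ^ 4 * h₃)
  have : (a - 6 * b - 4 * c) * (a + 6 * b + 4 * c) * x₀ ^ 8 = 0 := by
    linear_combination (a * P - (6 * b + 4 * c) * x₀ ^ 4) * hT - a ^ 2 * hP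
  rcases mul_eq_zero.mp ((mul_eq_zero.mp this).resolve_right (pow_ne_zero _ hx₀)) with h | h <;>
    simp [singularDiscr_eq_zero_iff, h]

theorem singularDiscr_eq_zero_of_two_two_sq_eq (h : IsCritical a b c x₀ x₁ x₂ x₃)
    (h₁ : x₁ ^ 2 = x₀ ^ 2) (h₃ : x₃ ^ 2 = x₂ ^ 2) (h₂ : x₂ ^ 2 ≠ x₀ ^ 2) :
    singularDiscr a b c = 0 := by
  have r := (mul_eq_zero.mp h.swap₁₂.sq_sub_sq_mul_eq_zero).resolve_left (sub_ne_zero.mpr h₂.symm)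
  have : (b + 2 * c) * (x₀ ^ 2 + x₂ ^ 2) = 0 := by linear_combination r - b * h₁ - b * h₃
  rcases mul_eq_zero.mp this with hb | hsum
  · simp [singularDiscr_eq_zero_iff, hb]
  have hw : x₂ ^ 2 = -x₀ ^ 2 := by linear_combination hsum
  have hx₀ : x₀ ≠ 0 := by rintro rfl; simp_all
  have d₀ := h.d₀
  unfold partialZero at d₀
  set P := x₀ * x₁ * x₂ * x₃
  have hT : a * P - (2 * b - 4 * c) * x₀ ^ 4 = 0 := by
    linear_combination x₀ * d₀ - 2 * b * x₀ ^ 2 * (h₁ + h₃ + 2 * hw)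
  have hP : P ^ 2 = x₀ ^ 8 := by
    linear_combination
      x₀ ^ 2 * x₂ ^ 2 * x₃ ^ 2 * h₁ + x₀ ^ 4 * x₂ ^ 2 * h₃ + x₀ ^ 4 * (x₂ ^ 2 - x₀ ^ 2) * hw
  have : (a + 2 * b - 4 * c) * (a - 2 * b + 4 * c) * x₀ ^ 8 = 0 := by
    linear_combination (a * P + (2 * b - 4 * c) * x₀ ^ 4) * hT - a ^ 2 * hP
  rcases mul_eq_zero.mp ((mul_eq_zero.mp this).resolve_right (pow_ne_zero _ hx₀)) with h | h <;>
    simp [singularDiscr_eq_zero_iff, h]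

theorem singularDiscr_eq_zero_of_three_sq_eq (h : IsCritical a b c x₀ x₁ x₂ x₃)
    (h₁ : x₁ ^ 2 = x₀ ^ 2) (h₂ : x₂ ^ 2 = x₀ ^ 2) (h₃ : x₃ ^ 2 ≠ x₀ ^ 2) :
    singularDiscr a b c = 0 := by
  by_cases hc : c = 0
  · simp [singularDiscr_eq_zero_iff, hc]
  have r := (mul_eq_zero.mp h.swap₂₃.swap₁₂.sq_sub_sq_mul_eq_zero).resolve_left
    (sub_ne_zero.mpr h₃.symm)
  have hw : c * x₃ ^ 2 = -(b + c) * x₀ ^ 2 := by linear_combination r / 2 - b / 2 * (h₁ + h₂)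
  have hx₀ : x₀ ≠ 0 := by
    rintro rfl
    exact h₃ (by simpa [hc] using hw)
  have d₀ := h.d₀
  have d₃ := h.d₃
  unfold partialZero at d₀ d₃
  set P := x₀ * x₁ * x₂ * x₃
  have hT : a * c * P - 2 * (b - 2 * c) * (b + c) * x₀ ^ 4 = 0 := by
    linear_combination c * x₀ * d₀ - 2 * b * c * x₀ ^ 2 * (h₁ + h₂) - 2 * b * x₀ ^ 2 * hw
  have hS : a * x₀ ^ 6 + 2 * (b - 2 * c) * x₀ ^ 2 * P = 0 := by
    linear_combination x₀ * x₁ * x₂ * d₃ - a * x₀ ^ 2 * (x₂ ^ 2 * h₁ + x₀ ^ 2 * h₂) -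
      2 * b * P * (h₁ + h₂) - 4 * P * hw
  have : (a ^ 2 * c + 4 * b ^ 3 - 12 * b ^ 2 * c + 16 * c ^ 3) * x₀ ^ 6 = 0 := by
    linear_combination a * c * hS - 2 * (b - 2 * c) * x₀ ^ 2 * hT
  simp [singularDiscr_eq_zero_iff, (mul_eq_zero.mp this).resolve_right (pow_ne_zero _ hx₀)]

theorem singularDiscr_eq_zero (h : IsCritical a b c x₀ x₁ x₂ x₃)
    (hx : ¬(x₀ = 0 ∧ x₁ = 0 ∧ x₂ = 0 ∧ x₃ = 0)) : singularDiscr a b c = 0 := by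
  by_cases hbc : b = 2 * c
  · simp [singularDiscr_eq_zero_iff, hbc]
  by_cases h₁ : x₁ ^ 2 = x₀ ^ 2 <;> by_cases h₂ : x₂ ^ 2 = x₀ ^ 2 <;>
    by_cases h₃ : x₃ ^ 2 = x₀ ^ 2
  · refine h.singularDiscr_eq_zero_of_four_sq_eq (fun hx₀ => hx ?_) h₁ h₂ h₃
    simp_all
  · exact h.singularDiscr_eq_zero_of_three_sq_eq h₁ h₂ h₃
  · exact h.swap₂₃.singularDiscr_eq_zero_of_three_sq_eq h₁ h₃ h₂
  · exact h.singularDiscr_eq_zero_of_two_two_sq_eq h₁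
      (h.swap₁₂.swap₂₃.sq_eq_sq_of_ne hbc h₂ h₃) h₂
  · exact h.swap₁₂.swap₂₃.singularDiscr_eq_zero_of_three_sq_eq h₂ h₃ h₁
  · exact h.swap₁₂.singularDiscr_eq_zero_of_two_two_sq_eq h₂
      (h.swap₂₃.sq_eq_sq_of_ne hbc h₁ h₃) h₁
  · exact h.swap₂₃.swap₁₂.singularDiscr_eq_zero_of_two_two_sq_eq h₃
      (h.sq_eq_sq_of_ne hbc h₁ h₂) h₁
  · have h₁₂ := h.sq_eq_sq_of_ne hbc h₁ h₂
    have h₁₃ := h.swap₂₃.sq_eq_sq_of_ne hbc h₁ h₃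
    exact h.swap₀₁.swap₁₂.swap₂₃.singularDiscr_eq_zero_of_three_sq_eq h₁₂ h₁₃ (Ne.symm h₁)

end IsCritical

theorem isCritical_zero_one_zero_zero (hc : c = 0) : IsCritical a b c 0 1 0 0 := by
  constructor <;> simp [partialZero, hc]

theorem isCritical_one_one_zero_zero (h : b + 2 * c = 0) : IsCritical a b c 1 1 0 0 := by
  constructor <;> unfold partialZero
  all_goals first | linear_combination 2 * h | ring

open Complex in
theorem isCritical_I_one_zero_zero (h : b - 2 * c = 0) : IsCritical a b c I 1 0 0 := by
  constructor <;> unfold partialZero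
  · linear_combination 2 * I * h + 4 * c * I * I_sq
  · linear_combination -2 * h + 2 * b * I_sq
  all_goals ring

open Complex in
theorem isCritical_one_one_I_I (h : a + 2 * b - 4 * c = 0) : IsCritical a b c 1 1 I I := by
  constructor <;> unfold partialZero
  · linear_combination -h + (a + 4 * b) * I_sq
  · linear_combination -h + (a + 4 * b) * I_sq
  · linear_combination I * h + (2 * b + 4 * c) * I * I_sq
  · linear_combination I * h + (2 * b + 4 * c) * I * I_sq

open Complex in
theorem isCritical_neg_one_one_I_I (h : a - 2 * b + 4 * c = 0) :
    IsCritical a b c (-1) 1 I I := by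
  constructor <;> unfold partialZero
  · linear_combination -h + (a - 4 * b) * I_sq
  · linear_combination h + (4 * b - a) * I_sq
  · linear_combination -I * h + (2 * b + 4 * c) * I * I_sq
  · linear_combination -I * h + (2 * b + 4 * c) * I * I_sq

theorem isCritical_one_one_one_neg_one (h : a - 6 * b - 4 * c = 0) :
    IsCritical a b c 1 1 1 (-1) := by
  constructor <;> unfold partialZero
  · linear_combination -h
  · linear_combination -h
  · linear_combination -h
  · linear_combination h

theorem isCritical_one_one_one_one (h : a + 6 * b + 4 * c = 0) : IsCritical a b c 1 1 1 1 := by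
  constructor <;> unfold partialZero <;> linear_combination h

theorem isCritical_one_one_one_zero (ha : a = 0) (h : b + c = 0) : IsCritical a b c 1 1 1 0 := by
  constructor <;> unfold partialZero
  all_goals first | linear_combination 4 * h | linear_combination ha

/-- The `3 + 1` pattern with the triple normalised to `1`: the lone coordinate is then `P`, which is
determined by `hT` in `IsCritical.singularDiscr_eq_zero_of_three_sq_eq`. -/
theorem isCritical_of_cubic_eq_zero (ha : a ≠ 0) (hc : c ≠ 0)
    (h : a ^ 2 * c + 4 * b ^ 3 - 12 * b ^ 2 * c + 16 * c ^ 3 = 0) :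
    IsCritical a b c (2 * (b - 2 * c) * (b + c) / (a * c)) 1 1 1 := by
  constructor <;> unfold partialZero <;> field_simp
  · linear_combination (a ^ 2 * c + 8 * (b - 2 * c) * (b + c) ^ 2) * h
  all_goals linear_combination 2 * b * (b + c) * h

theorem exists_isCritical_of_singularDiscr_eq_zero (hD : singularDiscr a b c = 0) :
    ∃ x₀ x₂ x₃, IsCritical a b c x₀ 1 x₂ x₃ := by
  rcases singularDiscr_eq_zero_iff.mp hD with h | h | h | h | h | h | h | h
  · exact ⟨_, _, _, isCritical_zero_one_zero_zero h⟩
  · exact ⟨_, _, _, isCritical_one_one_zero_zero h⟩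
  · exact ⟨_, _, _, isCritical_I_one_zero_zero h⟩
  · exact ⟨_, _, _, isCritical_one_one_I_I h⟩
  · exact ⟨_, _, _, isCritical_neg_one_one_I_I h⟩
  · exact ⟨_, _, _, isCritical_one_one_one_neg_one h⟩
  · exact ⟨_, _, _, isCritical_one_one_one_one h⟩
  by_cases hc : c = 0
  · exact ⟨_, _, _, isCritical_zero_one_zero_zero hc⟩
  by_cases ha : a = 0
  · have : 4 * (b + c) * (b - 2 * c) ^ 2 = 0 := by linear_combination h - a * c * ha
    rcases mul_eq_zero.mp this with hbc | hbc
    · exact ⟨_, _, _, isCritical_one_one_one_zero ha (by linear_combination hbc / 4)⟩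
    · exact ⟨_, _, _, isCritical_I_one_zero_zero (pow_eq_zero_iff two_ne_zero |>.mp hbc)⟩
  exact ⟨_, _, _, isCritical_of_cubic_eq_zero ha hc h⟩

end Quartic

theorem statement17_general (a b c : ℂ) :
    (∃ x : Fin 4 → ℂ, x ≠ 0 ∧
        ∀ i : Fin 4, MvPolynomial.eval x (MvPolynomial.pderiv i (quartic a b c)) = 0) ↔
      c * (b + 2 * c) * (b - 2 * c) * (a + 2 * b - 4 * c) * (a - 2 * b + 4 * c) *
        (a - 6 * b - 4 * c) * (a + 6 * b + 4 * c) *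
        (a ^ 2 * c + 4 * b ^ 3 - 12 * b ^ 2 * c + 16 * c ^ 3) = 0 := by
  constructor
  · rintro ⟨x, hx, hcrit⟩
    exact ((Quartic.isCritical_iff x).mpr hcrit).singularDiscr_eq_zero
      (by simpa [funext_iff, Fin.forall_fin_succ] using hx)
  · intro hD
    obtain ⟨x₀, x₂, x₃, hcrit⟩ := Quartic.exists_isCritical_of_singularDiscr_eq_zero hD
    exact ⟨![x₀, 1, x₂, x₃], by simp [funext_iff, Fin.forall_fin_succ],
      (Quartic.isCritical_iff _).mp hcrit⟩

theorem statement17 (a b c : ℂ) (h : ¬(a = 0 ∧ b = 0 ∧ c = 0)) :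
    (∃ x : Fin 4 → ℂ, x ≠ 0 ∧
        ∀ i : Fin 4, MvPolynomial.eval x (MvPolynomial.pderiv i (quartic a b c)) = 0) ↔
      c * (b + 2 * c) * (b - 2 * c) * (a + 2 * b - 4 * c) * (a - 2 * b + 4 * c) *
        (a - 6 * b - 4 * c) * (a + 6 * b + 4 * c) *
        (a ^ 2 * c + 4 * b ^ 3 - 12 * b ^ 2 * c + 16 * c ^ 3) = 0 :=
  statement17_general a b c

end
end
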